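/- The second iterated antiderivative of a Haar wavelet at level j is nondecreasing on [A,B] and satisfies 0 ≤ p_{2,j,k}(x) ≤ (B − A)²/(4m²) for all x ∈ [A,B], where m = 2^j. -/

import Mathlib

open MeasureTheory intervalIntegral

/-- The Haar wavelet `h_{j,k}` on the interval `[A, B)`. -/
noncomputable def haarW (A B : ℝ) (j k : ℕ) (x : ℝ) : ℝ :=
  if A + (k : ℝ) * (B - A) / 2 ^ j ≤ x ∧ x < A + ((k : ℝ) + 1 / 2) * (B - A) / 2 ^ j then 1
  else if A + ((k : ℝ) + 1 / 2) * (B - A) / 2 ^ j ≤ x ∧ x < A + ((k : ℝ) + 1) * (B - A) / 2 ^ j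
    then -1
  else 0

/-- First antiderivative `p_{1,j,k}` of the Haar wavelet. -/
noncomputable def haarP1 (A B : ℝ) (j k : ℕ) (x : ℝ) : ℝ :=
  ∫ t in A..x, haarW A B j k t

/-- Second iterated antiderivative `p_{2,j,k}` of the Haar wavelet. -/
noncomputable def haarP2 (A B : ℝ) (j k : ℕ) (x : ℝ) : ℝ :=
  ∫ t in A..x, haarP1 A B j k t

namespace HaarAux

variable (A B : ℝ) (j k : ℕ)

noncomputable def aa : ℝ := A + (k : ℝ) * (B - A) / 2 ^ j
noncomputable def cc : ℝ := A + ((k : ℝ) + 1 / 2) * (B - A) / 2 ^ j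
noncomputable def bb : ℝ := A + ((k : ℝ) + 1) * (B - A) / 2 ^ j

lemma cc_eq : cc A B j k = aa A B j k + (B - A) / 2 ^ j / 2 := by
  unfold aa cc; ring

lemma bb_eq : bb A B j k = cc A B j k + (B - A) / 2 ^ j / 2 := by
  unfold bb cc; ring

lemma half_pos (hAB : A < B) : (0:ℝ) < (B - A) / 2 ^ j / 2 := by
  have hBA : (0:ℝ) < B - A := sub_pos.mpr hAB
  positivity

lemma aa_le_cc (hAB : A < B) : aa A B j k ≤ cc A B j k := by
  rw [cc_eq]; linarith [half_pos A B j hAB]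

lemma cc_le_bb (hAB : A < B) : cc A B j k ≤ bb A B j k := by
  rw [bb_eq]; linarith [half_pos A B j hAB]

lemma A_le_aa (hAB : A < B) : A ≤ aa A B j k := by
  unfold aa
  have hBA : (0:ℝ) < B - A := sub_pos.mpr hAB
  have : (0:ℝ) ≤ (k : ℝ) * (B - A) / 2 ^ j := by positivity
  linarith

lemma bb_le_B (hAB : A < B) (hk : k < 2 ^ j) : bb A B j k ≤ B := by
  have h1 : ((k : ℝ) + 1) ≤ 2 ^ j := by exact_mod_cast Nat.succ_le_of_lt hk
  have h2 : (0:ℝ) < (2:ℝ) ^ j := by positivity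
  have hBA : (0:ℝ) ≤ B - A := le_of_lt (sub_pos.mpr hAB)
  have h3 : ((k:ℝ)+1)/2^j ≤ 1 := (div_le_one h2).mpr h1
  have h4 : ((k:ℝ)+1)/2^j * (B - A) ≤ B - A := mul_le_of_le_one_left hBA h3
  have h5 : ((k:ℝ)+1) * (B - A) / 2^j = ((k:ℝ)+1)/2^j * (B - A) := by ring
  unfold bb
  linarith

lemma hW1 {t : ℝ} (h1 : aa A B j k ≤ t) (h2 : t < cc A B j k) : haarW A B j k t = 1 := by
  unfold aa at h1; unfold cc at h2
  unfold haarW; rw [if_pos ⟨h1, h2⟩]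

lemma hW2 {t : ℝ} (h1 : cc A B j k ≤ t) (h2 : t < bb A B j k) : haarW A B j k t = -1 := by
  unfold cc at h1; unfold bb at h2
  unfold haarW
  rw [if_neg (by rintro ⟨-, h⟩; linarith), if_pos ⟨h1, h2⟩]

lemma hW0a {t : ℝ} (hAB : A < B) (h : t < aa A B j k) : haarW A B j k t = 0 := by
  have hle := aa_le_cc A B j k hAB
  unfold aa at h; unfold aa cc at hle
  unfold haarW
  rw [if_neg (by rintro ⟨h1, -⟩; linarith), if_neg (by rintro ⟨h1, -⟩; linarith)]

lemma hW0b {t : ℝ} (hAB : A < B) (h : bb A B j k ≤ t) : haarW A B j k t = 0 := by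
  have hle := cc_le_bb A B j k hAB
  unfold bb at h; unfold cc bb at hle
  unfold haarW
  rw [if_neg (by rintro ⟨-, h2⟩; linarith), if_neg (by rintro ⟨-, h2⟩; linarith)]

lemma measurable_haarW : Measurable (haarW A B j k) := by
  unfold haarW
  exact Measurable.ite measurableSet_Ico measurable_const
    (Measurable.ite measurableSet_Ico measurable_const measurable_const)

lemma intInt_haarW (u v : ℝ) : IntervalIntegrable (haarW A B j k) volume u v := by
  rw [intervalIntegrable_iff]
  refine Integrable.mono' (g := fun _ => (1:ℝ))
    ((integrableOn_const_iff (C := (1:ℝ))).mpr (Or.inr ?_))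
    ((measurable_haarW A B j k).aestronglyMeasurable) ?_
  · exact measure_Ioc_lt_top
  · filter_upwards with t
    unfold haarW; split_ifs <;> norm_num

lemma ae_ne (y : ℝ) : ∀ᵐ t : ℝ ∂volume, t ≠ y := by
  have : (volume : Measure ℝ) {y} = 0 := measure_singleton y
  filter_upwards [measure_eq_zero_iff_ae_notMem.mp this] with t ht
  simpa using ht

lemma p1_left (hAB : A < B) {x : ℝ} (hx2 : x ≤ aa A B j k) : haarP1 A B j k x = 0 := by
  unfold haarP1
  rw [intervalIntegral.integral_congr_ae (g := fun _ => (0:ℝ)), intervalIntegral.integral_zero]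
  filter_upwards [ae_ne (aa A B j k)] with t ht hmem
  rw [Set.mem_uIoc] at hmem
  have htle : t ≤ aa A B j k := by
    rcases hmem with ⟨-, h⟩ | ⟨-, h⟩
    · exact le_trans h hx2
    · exact le_trans h (A_le_aa A B j k hAB)
  exact hW0a A B j k hAB (lt_of_le_of_ne htle ht)

lemma p1_mid1 (hAB : A < B) {x : ℝ} (hx1 : aa A B j k ≤ x) (hx2 : x ≤ cc A B j k) :
    haarP1 A B j k x = x - aa A B j k := by
  unfold haarP1
  rw [← intervalIntegral.integral_add_adjacent_intervals (b := aa A B j k)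
      (intInt_haarW A B j k _ _) (intInt_haarW A B j k _ _)]
  have h1 : (∫ t in A..aa A B j k, haarW A B j k t) = 0 := p1_left A B j k hAB le_rfl
  have h2 : (∫ t in aa A B j k..x, haarW A B j k t) = x - aa A B j k := by
    rw [intervalIntegral.integral_congr_ae (g := fun _ => (1:ℝ))]
    · simp
    · filter_upwards [ae_ne (cc A B j k)] with t ht hmem
      rw [Set.uIoc_of_le hx1, Set.mem_Ioc] at hmem
      exact hW1 A B j k hmem.1.le (lt_of_le_of_ne (le_trans hmem.2 hx2) ht)
  rw [h1, h2, zero_add]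

lemma p1_mid2 (hAB : A < B) {x : ℝ} (hx1 : cc A B j k ≤ x) (hx2 : x ≤ bb A B j k) :
    haarP1 A B j k x = bb A B j k - x := by
  unfold haarP1
  rw [← intervalIntegral.integral_add_adjacent_intervals (b := cc A B j k)
      (intInt_haarW A B j k _ _) (intInt_haarW A B j k _ _)]
  have h1 : (∫ t in A..cc A B j k, haarW A B j k t) = cc A B j k - aa A B j k := by
    have := p1_mid1 A B j k hAB (aa_le_cc A B j k hAB) (le_refl (cc A B j k))
    unfold haarP1 at this; exact this
  have h2 : (∫ t in cc A B j k..x, haarW A B j k t) = -(x - cc A B j k) := by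
    rw [intervalIntegral.integral_congr_ae (g := fun _ => (-1:ℝ))]
    · simp
    · filter_upwards [ae_ne (bb A B j k)] with t ht hmem
      rw [Set.uIoc_of_le hx1, Set.mem_Ioc] at hmem
      exact hW2 A B j k hmem.1.le (lt_of_le_of_ne (le_trans hmem.2 hx2) ht)
  rw [h1, h2]
  have e1 := cc_eq A B j k
  have e2 := bb_eq A B j k
  linarith

lemma p1_right (hAB : A < B) {x : ℝ} (hx : bb A B j k ≤ x) : haarP1 A B j k x = 0 := by
  unfold haarP1
  rw [← intervalIntegral.integral_add_adjacent_intervals (b := bb A B j k)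
      (intInt_haarW A B j k _ _) (intInt_haarW A B j k _ _)]
  have h1 : (∫ t in A..bb A B j k, haarW A B j k t) = 0 := by
    have := p1_mid2 A B j k hAB (cc_le_bb A B j k hAB) (le_refl (bb A B j k))
    unfold haarP1 at this; rw [this]; ring
  have h2 : (∫ t in bb A B j k..x, haarW A B j k t) = 0 := by
    rw [intervalIntegral.integral_congr (g := fun _ => (0:ℝ)), intervalIntegral.integral_zero]
    intro t hmem
    rw [Set.uIcc_of_le hx, Set.mem_Icc] at hmem
    exact hW0b A B j k hAB hmem.1
  rw [h1, h2, add_zero]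

lemma p1_nonneg (hAB : A < B) {x : ℝ} : 0 ≤ haarP1 A B j k x := by
  rcases le_total x (aa A B j k) with h | h
  · rw [p1_left A B j k hAB h]
  · rcases le_total x (cc A B j k) with h2 | h2
    · rw [p1_mid1 A B j k hAB h h2]; linarith
    · rcases le_total x (bb A B j k) with h3 | h3
      · rw [p1_mid2 A B j k hAB h2 h3]; linarith
      · rw [p1_right A B j k hAB h3]

lemma intInt_p1 (u v : ℝ) : IntervalIntegrable (haarP1 A B j k) volume u v := by
  have : Continuous (haarP1 A B j k) :=
    intervalIntegral.continuous_primitive (intInt_haarW A B j k) A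
  exact this.intervalIntegrable u v

lemma p2_sub (x y : ℝ) :
    haarP2 A B j k y = haarP2 A B j k x + ∫ t in x..y, haarP1 A B j k t := by
  unfold haarP2
  rw [intervalIntegral.integral_add_adjacent_intervals (intInt_p1 A B j k _ _)
    (intInt_p1 A B j k _ _)]

lemma p2_mono (hAB : A < B) : MonotoneOn (haarP2 A B j k) (Set.Icc A B) := by
  intro x hx y hy hxy
  have h := p2_sub A B j k x y
  have hnn : 0 ≤ ∫ t in x..y, haarP1 A B j k t := by
    apply intervalIntegral.integral_nonneg hxy
    intro u hu
    exact p1_nonneg A B j k hAB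
  linarith

lemma p2_B (hAB : A < B) (hk : k < 2 ^ j) :
    haarP2 A B j k B = (B - A) ^ 2 / (4 * ((2 : ℝ) ^ j) ^ 2) := by
  have haac := aa_le_cc A B j k hAB
  have hccb := cc_le_bb A B j k hAB
  unfold haarP2
  rw [← intervalIntegral.integral_add_adjacent_intervals (b := aa A B j k)
      (intInt_p1 A B j k _ _) (intInt_p1 A B j k _ _),
    ← intervalIntegral.integral_add_adjacent_intervals (a := aa A B j k) (b := cc A B j k)
      (intInt_p1 A B j k _ _) (intInt_p1 A B j k _ _),
    ← intervalIntegral.integral_add_adjacent_intervals (a := cc A B j k) (b := bb A B j k)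
      (intInt_p1 A B j k _ _) (intInt_p1 A B j k _ _)]
  have h1 : (∫ t in A..aa A B j k, haarP1 A B j k t) = 0 := by
    rw [intervalIntegral.integral_congr (g := fun _ => (0:ℝ)), intervalIntegral.integral_zero]
    intro t ht
    rw [Set.uIcc_of_le (A_le_aa A B j k hAB), Set.mem_Icc] at ht
    exact p1_left A B j k hAB ht.2
  have h2 : (∫ t in aa A B j k..cc A B j k, haarP1 A B j k t)
      = (cc A B j k ^ 2 - aa A B j k ^ 2) / 2 - (cc A B j k - aa A B j k) * aa A B j k := by
    rw [intervalIntegral.integral_congr (g := fun t => t - aa A B j k)]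
    · rw [intervalIntegral.integral_sub intervalIntegrable_id intervalIntegrable_const,
        integral_id, intervalIntegral.integral_const, smul_eq_mul]
    · intro t ht
      rw [Set.uIcc_of_le haac, Set.mem_Icc] at ht
      exact p1_mid1 A B j k hAB ht.1 ht.2
  have h3 : (∫ t in cc A B j k..bb A B j k, haarP1 A B j k t)
      = (bb A B j k - cc A B j k) * bb A B j k - (bb A B j k ^ 2 - cc A B j k ^ 2) / 2 := by
    rw [intervalIntegral.integral_congr (g := fun t => bb A B j k - t)]
    · rw [intervalIntegral.integral_sub intervalIntegrable_const intervalIntegrable_id,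
        integral_id, intervalIntegral.integral_const, smul_eq_mul]
    · intro t ht
      rw [Set.uIcc_of_le hccb, Set.mem_Icc] at ht
      exact p1_mid2 A B j k hAB ht.1 ht.2
  have h4 : (∫ t in bb A B j k..B, haarP1 A B j k t) = 0 := by
    rw [intervalIntegral.integral_congr (g := fun _ => (0:ℝ)), intervalIntegral.integral_zero]
    intro t ht
    rw [Set.uIcc_of_le (bb_le_B A B j k hAB hk), Set.mem_Icc] at ht
    exact p1_right A B j k hAB ht.1
  rw [h1, h2, h3, h4]
  have e1 := cc_eq A B j k
  have e2 := bb_eq A B j k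
  have h2j : ((2:ℝ) ^ j) ≠ 0 := by positivity
  rw [e2, e1]
  field_simp
  ring

end HaarAux

theorem haarP2_monotone_bounded (A B : ℝ) (hAB : A < B) (j k : ℕ) (hk : k < 2 ^ j) :
    MonotoneOn (haarP2 A B j k) (Set.Icc A B) ∧
    ∀ x ∈ Set.Icc A B,
      0 ≤ haarP2 A B j k x ∧
      haarP2 A B j k x ≤ (B - A) ^ 2 / (4 * ((2 : ℝ) ^ j) ^ 2) := by
  have hmono := HaarAux.p2_mono A B j k hAB
  refine ⟨hmono, fun x hx => ⟨?_, ?_⟩⟩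
  · have hA0 : haarP2 A B j k A = 0 := by
      unfold haarP2; exact intervalIntegral.integral_same
    have := hmono (Set.left_mem_Icc.mpr hAB.le) hx hx.1
    linarith
  · have hB := hmono hx (Set.right_mem_Icc.mpr hAB.le) hx.2
    rw [HaarAux.p2_B A B j k hAB hk] at hB
    exact hB
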